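/- With E^{(k)} = I + T^{(k)} and H^{(k)} = E^{(1)}⋯E^{(k)} as above, trace(H^{(k)}) = −3^k + 2k + N + 1 for 1 ≤ k ≤ N. In particular trace(H^{(N)}) = −3^N + 3N + 1. -/

import Mathlib

/-!
Since `T^(k)` is supported on row `k`, right multiplication by `E^(k) = 1 + T^(k)` adds to each
column `j` the multiple `T^(k)_{kj}` of column `k`. By induction the columns `j ≥ k` of `H^(k)`
(indices from `0`, so `H^(k) = E^(0) ⋯ E^(k-1)`) are explicit: `2·3^(k-i-1)·(-1)^(i+j)` in rows
`i < k` and the identity below. Hence `trace (H^(k) T^(k)) = ∑_{i<k} H^(k)_{ik} T^(k)_{ki}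
= -4 ∑_{i<k} 3^(k-1-i) = 2 - 2·3^k`, and summing these increments from `trace 1 = N` gives the
formula.
-/

open Matrix BigOperators

def Emat (N : ℕ) (k : ℕ) : Matrix (Fin N) (Fin N) ℝ :=
  fun i j => (if i = j then 1 else 0) +
    (if (i : ℕ) = k then
       (if (j : ℕ) < k then 2 * (-1 : ℝ) ^ (k - (j : ℕ) + 1)
        else if k < (j : ℕ) then 2 * (-1 : ℝ) ^ ((j : ℕ) - k)
        else 0)
     else 0)

noncomputable def Hmat (N k : ℕ) : Matrix (Fin N) (Fin N) ℝ :=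
  ((List.range k).map (Emat N)).prod

def trow (k j : ℕ) : ℝ :=
  if j < k then 2 * (-1 : ℝ) ^ (k - j + 1)
  else if k < j then 2 * (-1 : ℝ) ^ (j - k) else 0

def Tmat (N k : ℕ) : Matrix (Fin N) (Fin N) ℝ :=
  fun i j => if (i : ℕ) = k then trow k j else 0

lemma trow_of_lt {k j : ℕ} (h : j < k) : trow k j = 2 * (-1 : ℝ) ^ (k - j + 1) := by
  simp [trow, h]

lemma trow_of_gt {k j : ℕ} (h : k < j) : trow k j = 2 * (-1 : ℝ) ^ (j - k) := by
  simp [trow, h, h.not_gt]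

@[simp] lemma trow_self (k : ℕ) : trow k k = 0 := by
  simp [trow]

lemma Emat_eq_one_add_Tmat (N k : ℕ) : Emat N k = 1 + Tmat N k := by
  ext i j
  simp [Emat, Tmat, trow, Matrix.one_apply]

@[simp] lemma Hmat_zero (N : ℕ) : Hmat N 0 = 1 := by
  simp [Hmat]

lemma Hmat_succ (N k : ℕ) : Hmat N (k + 1) = Hmat N k + Hmat N k * Tmat N k := by
  simp [Hmat, List.range_succ, Emat_eq_one_add_Tmat, mul_add]

lemma mul_Tmat_apply {N : ℕ} (A : Matrix (Fin N) (Fin N) ℝ) (k i j : Fin N) :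
    (A * Tmat N k) i j = A i k * trow k j := by
  rw [Matrix.mul_apply, Finset.sum_eq_single k]
  · simp [Tmat]
  · intro l _ hl
    simp [Tmat, Fin.val_ne_of_ne hl]
  · simp

lemma Hmat_apply_of_le (N k : ℕ) (i j : Fin N) (hj : k ≤ j) :
    Hmat N k i j = if (i : ℕ) < k then 2 * 3 ^ (k - i - 1) * (-1 : ℝ) ^ ((i : ℕ) + j)
      else if i = j then 1 else 0 := by
  induction k generalizing j with
  | zero => simp [Matrix.one_apply]
  | succ k ih =>
    have hkj : k < j := by omega
    rw [Hmat_succ, Matrix.add_apply, mul_Tmat_apply _ ⟨k, by omega⟩, ih j hkj.le,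
      ih ⟨k, by omega⟩ le_rfl, trow_of_gt hkj]
    rcases lt_trichotomy (i : ℕ) k with hik | rfl | hki
    · have hsign : (-1 : ℝ) ^ ((i : ℕ) + k) * (-1) ^ ((j : ℕ) - k) = (-1) ^ ((i : ℕ) + j) := by
        rw [← pow_add]; congr 1; omega
      have hpow : (3 : ℝ) ^ (k + 1 - i - 1) = 3 * 3 ^ (k - i - 1) := by
        rw [← pow_succ']; congr 1; omega
      simp only [hik, if_true, Nat.lt_succ_of_lt hik, hpow]
      linear_combination 4 * (3 : ℝ) ^ (k - i - 1) * hsign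
    · have hsign : (-1 : ℝ) ^ ((j : ℕ) - i) = (-1) ^ ((i : ℕ) + j) := by
        rw [show (i : ℕ) + j = (j - i) + 2 * i by omega, pow_add, pow_mul]; norm_num
      simp [Fin.ne_of_lt hkj, hsign]
    · have hik : i ≠ ⟨k, by omega⟩ := Fin.ne_of_gt hki
      simp [hki.not_gt, show ¬ (i : ℕ) < k + 1 by omega, hik]

lemma sum_fin_ite_lt {M : Type*} [AddCommMonoid M] (f : ℕ → M) {k N : ℕ} (hkN : k ≤ N) :
    ∑ i : Fin N, (if (i : ℕ) < k then f i else 0) = ∑ i ∈ Finset.range k, f i := by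
  rw [Fin.sum_univ_eq_sum_range (fun i => if i < k then f i else 0), ← Finset.sum_filter]
  congr 1
  ext i
  simp only [Finset.mem_filter, Finset.mem_range]
  omega

lemma trace_Hmat_mul_Tmat {N k : ℕ} (hk : k < N) :
    trace (Hmat N k * Tmat N k) = 2 - 2 * 3 ^ k := by
  have hdiag : ∀ i : Fin N, (Hmat N k * Tmat N k) i i =
      if (i : ℕ) < k then -4 * (3 : ℝ) ^ (k - 1 - i) else 0 := by
    intro i
    rw [mul_Tmat_apply _ ⟨k, hk⟩, Hmat_apply_of_le N k i _ le_rfl]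
    rcases lt_trichotomy (i : ℕ) k with hik | hik | hki
    · have hsign : (-1 : ℝ) ^ ((i : ℕ) + k) * (-1) ^ (k - i + 1) = -1 := by
        rw [← pow_add]; exact Odd.neg_one_pow ⟨k, by omega⟩
      rw [if_pos hik, if_pos hik, trow_of_lt hik, show k - 1 - i = k - i - 1 by omega]
      linear_combination 4 * (3 : ℝ) ^ (k - i - 1) * hsign
    · simp [hik]
    · have hik : i ≠ ⟨k, hk⟩ := Fin.ne_of_gt hki
      simp [hki.not_gt, hik]
  simp only [trace, diag_apply, hdiag]
  rw [sum_fin_ite_lt (fun i => -4 * (3 : ℝ) ^ (k - 1 - i)) hk.le, ← Finset.mul_sum,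
    Finset.sum_range_reflect (fun i => (3 : ℝ) ^ i), geom_sum_eq (by norm_num)]
  ring

lemma trace_Hmat {N k : ℕ} (hkN : k ≤ N) : trace (Hmat N k) = -(3 : ℝ) ^ k + 2 * k + N + 1 := by
  induction k with
  | zero => simp
  | succ k ih =>
    rw [Hmat_succ, trace_add, ih (by omega), trace_Hmat_mul_Tmat (by omega)]
    push_cast
    ring

theorem stmt_16_general (N k : ℕ) (hkN : k ≤ N) :
    Matrix.trace (Hmat N k) = -(3 : ℝ) ^ k + 2 * k + N + 1 ∧
    Matrix.trace (Hmat N N) = -(3 : ℝ) ^ N + 3 * N + 1 := by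
  refine ⟨trace_Hmat hkN, ?_⟩
  rw [trace_Hmat le_rfl]
  ring

theorem stmt_16 (N k : ℕ) (hk1 : 1 ≤ k) (hkN : k ≤ N) :
    Matrix.trace (Hmat N k) = -(3 : ℝ) ^ k + 2 * k + N + 1 ∧
    Matrix.trace (Hmat N N) = -(3 : ℝ) ^ N + 3 * N + 1 :=
  stmt_16_general N k hkN
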